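/- arXiv:2403.12732 — 5 statements merged into one kernel-verified Lean document; each statement's English description precedes it below -/
import Mathlib

section
/- Let Φ : H → ℝ^t be a bounded linear operator, V = Φ*Φ, K = ΦΦ*, α > 0, and k ∈ H. Then ⟨k, (V + αI)^{-1} k⟩ = (1/α)(⟨k, k⟩ - (Φk)ᵀ(K + αI)^{-1}(Φk)). -/
/-!
The push-through identity `(Φ*Φ + α) Φ* = Φ* (ΦΦ* + α)` shows that `α⁻¹ (1 - Φ* (K + α)⁻¹ Φ)`
is a right inverse of `V + α` (the Woodbury identity), so it is `(V + α)⁻¹`; pairing it with `k`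
and moving `Φ*` across the inner product gives the formula.
-/

open ContinuousLinearMap
open scoped RealInnerProductSpace

namespace ContinuousLinearMap

variable {𝕜 E F : Type*} [NontriviallyNormedField 𝕜] [NormedAddCommGroup E] [NormedSpace 𝕜 E]
  [NormedAddCommGroup F] [NormedSpace 𝕜 F]

theorem comp_add_smul_id_comp_eq (A : E →L[𝕜] F) (B : F →L[𝕜] E) (α : 𝕜) :
    (B ∘L A + α • ContinuousLinearMap.id 𝕜 E) ∘L B =
      B ∘L (A ∘L B + α • ContinuousLinearMap.id 𝕜 F) := by
  simp only [add_comp, comp_add, smul_comp, comp_smul, comp_assoc, id_comp, comp_id]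

theorem comp_add_smul_id_comp_woodbury (A : E →L[𝕜] F) (B : F →L[𝕜] E) {α : 𝕜} (hα : α ≠ 0)
    {C : F →L[𝕜] F}
    (hC : (A ∘L B + α • ContinuousLinearMap.id 𝕜 F) ∘L C = ContinuousLinearMap.id 𝕜 F) :
    (B ∘L A + α • ContinuousLinearMap.id 𝕜 E) ∘L
        (α⁻¹ • (ContinuousLinearMap.id 𝕜 E - B ∘L C ∘L A)) =
      ContinuousLinearMap.id 𝕜 E := by
  have hBCA : (B ∘L A + α • ContinuousLinearMap.id 𝕜 E) ∘L B ∘L C ∘L A = B ∘L A := by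
    rw [← comp_assoc, comp_add_smul_id_comp_eq, comp_assoc, ← comp_assoc _ C, hC, id_comp]
  rw [comp_smul, comp_sub, hBCA, comp_id, add_sub_cancel_left, smul_smul, inv_mul_cancel₀ hα,
    one_smul]

end ContinuousLinearMap

theorem posterior_variance_identity_general {H : Type*} [NormedAddCommGroup H] [InnerProductSpace ℝ H]
    [CompleteSpace H] {t : ℕ} (Φ : H →L[ℝ] EuclideanSpace ℝ (Fin t))
    (k : H) (α : ℝ) (hα : 0 < α)
    (Vinv : H →L[ℝ] H)
    (hV₂ : Vinv ∘L ((adjoint Φ) ∘L Φ + α • ContinuousLinearMap.id ℝ H)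
        = ContinuousLinearMap.id ℝ H)
    (Kinv : EuclideanSpace ℝ (Fin t) →L[ℝ] EuclideanSpace ℝ (Fin t))
    (hK₁ : (Φ ∘L (adjoint Φ) + α • ContinuousLinearMap.id ℝ (EuclideanSpace ℝ (Fin t))) ∘L Kinv
        = ContinuousLinearMap.id ℝ (EuclideanSpace ℝ (Fin t))) :
    ⟪k, Vinv k⟫ = α⁻¹ * (⟪k, k⟫ - ⟪Φ k, Kinv (Φ k)⟫) := by
  have hVinv : Vinv = α⁻¹ • (ContinuousLinearMap.id ℝ H - adjoint Φ ∘L Kinv ∘L Φ) :=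
    left_inv_eq_right_inv hV₂ (comp_add_smul_id_comp_woodbury Φ (adjoint Φ) hα.ne' hK₁)
  rw [hVinv]
  simp only [smul_apply, sub_apply, id_apply, comp_apply, inner_smul_right, inner_sub_right,
    adjoint_inner_right]

/-- `⟨k, (V + αI)⁻¹k⟩ = (1/α)(⟨k,k⟩ - (Φk)ᵀ(K + αI)⁻¹(Φk))`, where `V = Φ*Φ`, `K = ΦΦ*`. -/
theorem posterior_variance_identity {H : Type*} [NormedAddCommGroup H] [InnerProductSpace ℝ H]
    [CompleteSpace H] {t : ℕ} (Φ : H →L[ℝ] EuclideanSpace ℝ (Fin t))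
    (k : H) (α : ℝ) (hα : 0 < α)
    (Vinv : H →L[ℝ] H)
    (hV₁ : ((adjoint Φ) ∘L Φ + α • ContinuousLinearMap.id ℝ H) ∘L Vinv
        = ContinuousLinearMap.id ℝ H)
    (hV₂ : Vinv ∘L ((adjoint Φ) ∘L Φ + α • ContinuousLinearMap.id ℝ H)
        = ContinuousLinearMap.id ℝ H)
    (Kinv : EuclideanSpace ℝ (Fin t) →L[ℝ] EuclideanSpace ℝ (Fin t))
    (hK₁ : (Φ ∘L (adjoint Φ) + α • ContinuousLinearMap.id ℝ (EuclideanSpace ℝ (Fin t))) ∘L Kinv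
        = ContinuousLinearMap.id ℝ (EuclideanSpace ℝ (Fin t)))
    (hK₂ : Kinv ∘L (Φ ∘L (adjoint Φ) + α • ContinuousLinearMap.id ℝ (EuclideanSpace ℝ (Fin t)))
        = ContinuousLinearMap.id ℝ (EuclideanSpace ℝ (Fin t))) :
    ⟪k, Vinv k⟫ = α⁻¹ * (⟪k, k⟫ - ⟪Φ k, Kinv (Φ k)⟫) :=
  posterior_variance_identity_general Φ k α hα Vinv hV₂ Kinv hK₁
end

section
/- Let H be a real Hilbert space, Φ : H → ℝ^t a bounded linear operator, V = Φ*Φ, α > 0, and let μ ∈ H, R ≥ 0, and x-evaluation be given by a fixed vector k ∈ H. Then for every f ∈ H with ‖(V + αI)^{1/2}(f - μ)‖ ≤ R, one has |⟨k, f⟩ - ⟨k, μ⟩| ≤ (R/√α)·√(⟨k,k⟩ - (Φk)ᵀ(ΦΦ* + αI)^{-1}(Φk)). -/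
/-!
Put `w = α⁻¹ (k - Φ* (ΦΦ* + α)⁻¹ Φ k)`. The push-through identity gives `(Φ*Φ + α) w = k`, i.e.
`S² w = k`, so `⟨k, f - μ⟩ = ⟨S w, S (f - μ)⟩`, and Cauchy–Schwarz bounds this by
`‖S w‖ R` with `‖S w‖² = ⟨w, k⟩ = α⁻¹ (⟨k, k⟩ - ⟨Φ k, (ΦΦ* + α)⁻¹ Φ k⟩)`.
-/

open ContinuousLinearMap
open scoped RealInnerProductSpace

theorem LinearMap.comp_add_smul_id_apply_pushThrough {K E F : Type*} [Field K]
    [AddCommGroup E] [Module K E] [AddCommGroup F] [Module K F]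
    (A : E →ₗ[K] F) (B : F →ₗ[K] E) (M : F →ₗ[K] F) {α : K} (hα : α ≠ 0)
    (hM : (A ∘ₗ B + α • LinearMap.id) ∘ₗ M = LinearMap.id) (x : E) :
    (B ∘ₗ A + α • (LinearMap.id : E →ₗ[K] E)) (α⁻¹ • (x - B (M (A x)))) = x := by
  have hAx : A (B (M (A x))) + α • M (A x) = A x := by
    simpa using LinearMap.congr_fun hM (A x)
  have hBAx : B (A (B (M (A x)))) = B (A x) - α • B (M (A x)) := by
    rw [eq_sub_iff_add_eq, ← map_smul, ← map_add, hAx]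
  simp only [LinearMap.add_apply, LinearMap.comp_apply, LinearMap.smul_apply, LinearMap.id_apply,
    map_smul, map_sub, hBAx]
  match_scalars <;> field_simp <;> ring

theorem LinearMap.IsSymmetric.abs_inner_le_sqrt_mul_norm {E : Type*} [NormedAddCommGroup E]
    [InnerProductSpace ℝ E] {S : E →ₗ[ℝ] E} (hS : S.IsSymmetric) (w x : E) :
    |⟪S (S w), x⟫| ≤ √⟪w, S (S w)⟫ * ‖S x‖ := by
  rw [← hS, real_inner_self_eq_norm_sq, Real.sqrt_sq (norm_nonneg _), hS]
  exact abs_real_inner_le_norm _ _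

theorem analytic_ucb_general {H : Type*} [NormedAddCommGroup H] [InnerProductSpace ℝ H]
    [CompleteSpace H] {t : ℕ} (Φ : H →L[ℝ] EuclideanSpace ℝ (Fin t))
    (k μ : H) (α R : ℝ) (hα : 0 < α)
    (S : H →L[ℝ] H) (hSsa : ∀ f g : H, ⟪S f, g⟫ = ⟪f, S g⟫)
    (hSsq : S ∘L S = (adjoint Φ) ∘L Φ + α • ContinuousLinearMap.id ℝ H)
    (Kinv : EuclideanSpace ℝ (Fin t) →L[ℝ] EuclideanSpace ℝ (Fin t))
    (hK₁ : (Φ ∘L (adjoint Φ) + α • ContinuousLinearMap.id ℝ (EuclideanSpace ℝ (Fin t))) ∘L Kinv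
        = ContinuousLinearMap.id ℝ (EuclideanSpace ℝ (Fin t))) :
    ∀ f : H, ‖S (f - μ)‖ ≤ R →
      |⟪k, f⟫ - ⟪k, μ⟫|
        ≤ (R / Real.sqrt α) * Real.sqrt (⟪k, k⟫ - ⟪Φ k, Kinv (Φ k)⟫) := by
  intro f hf
  set w := α⁻¹ • (k - adjoint Φ (Kinv (Φ k)))
  have hSSw : S (S w) = k := by
    rw [← comp_apply, hSsq]
    exact LinearMap.comp_add_smul_id_apply_pushThrough _ _ _ hα.ne'
      (congrArg toLinearMap hK₁) k
  have hwk : ⟪w, k⟫ = α⁻¹ * (⟪k, k⟫ - ⟪Φ k, Kinv (Φ k)⟫) := by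
    rw [real_inner_smul_left, inner_sub_left, adjoint_inner_left, real_inner_comm (Φ k)]
  have hbound := (show (S : H →ₗ[ℝ] H).IsSymmetric from hSsa).abs_inner_le_sqrt_mul_norm w (f - μ)
  simp only [coe_coe, hSSw, inner_sub_right, hwk] at hbound
  calc |⟪k, f⟫ - ⟪k, μ⟫|
      ≤ √(α⁻¹ * (⟪k, k⟫ - ⟪Φ k, Kinv (Φ k)⟫)) * ‖S (f - μ)‖ := hbound
    _ ≤ √(α⁻¹ * (⟪k, k⟫ - ⟪Φ k, Kinv (Φ k)⟫)) * R := by gcongr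
    _ = R / √α * √(⟪k, k⟫ - ⟪Φ k, Kinv (Φ k)⟫) := by
      rw [Real.sqrt_mul (inv_nonneg.mpr hα.le), Real.sqrt_inv]
      ring

/-- Analytic upper confidence bound via Cauchy–Schwarz: if
`‖(V + αI)^{1/2}(f - μ)‖ ≤ R` then
`|⟨k,f⟩ - ⟨k,μ⟩| ≤ (R/√α)·√(⟨k,k⟩ - (Φk)ᵀ(ΦΦ* + αI)⁻¹(Φk))`. -/
theorem analytic_ucb {H : Type*} [NormedAddCommGroup H] [InnerProductSpace ℝ H]
    [CompleteSpace H] {t : ℕ} (Φ : H →L[ℝ] EuclideanSpace ℝ (Fin t))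
    (k μ : H) (α R : ℝ) (hα : 0 < α) (hR : 0 ≤ R)
    (S : H →L[ℝ] H) (hSsa : ∀ f g : H, ⟪S f, g⟫ = ⟪f, S g⟫)
    (hSpos : ∀ f : H, 0 ≤ ⟪f, S f⟫)
    (hSsq : S ∘L S = (adjoint Φ) ∘L Φ + α • ContinuousLinearMap.id ℝ H)
    (Kinv : EuclideanSpace ℝ (Fin t) →L[ℝ] EuclideanSpace ℝ (Fin t))
    (hK₁ : (Φ ∘L (adjoint Φ) + α • ContinuousLinearMap.id ℝ (EuclideanSpace ℝ (Fin t))) ∘L Kinv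
        = ContinuousLinearMap.id ℝ (EuclideanSpace ℝ (Fin t)))
    (hK₂ : Kinv ∘L (Φ ∘L (adjoint Φ) + α • ContinuousLinearMap.id ℝ (EuclideanSpace ℝ (Fin t)))
        = ContinuousLinearMap.id ℝ (EuclideanSpace ℝ (Fin t))) :
    ∀ f : H, ‖S (f - μ)‖ ≤ R →
      |⟪k, f⟫ - ⟪k, μ⟫|
        ≤ (R / Real.sqrt α) * Real.sqrt (⟪k, k⟫ - ⟪Φ k, Kinv (Φ k)⟫) :=
  analytic_ucb_general Φ k μ α R hα S hSsa hSsq Kinv hK₁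
end

section
/- Let H be the RKHS of a kernel k, let R, B ≥ 0, y ∈ ℝ^t, and points x₁,…,x_t, x ∈ X. Then the supremum of f(x) over f ∈ H satisfying ‖(f(x₁),…,f(x_t)) - y‖ ≤ R and ‖f‖_H ≤ B equals the supremum of k_{t+1}(x)ᵀw over w ∈ ℝ^{t+1} satisfying ‖K_{t,t+1}w - y‖ ≤ R and wᵀK_{t+1}w ≤ B², where k_{t+1}(x) = (k(x,x₁),…,k(x,x_t),k(x,x))ᵀ, K_{t+1} is the kernel matrix of (x₁,…,x_t,x), and K_{t,t+1} consists of its first t rows. -/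
/-!
Both suprema are taken of the last coordinate of an evaluation vector
`e = (f(x₁), …, f(x_t), f(x))` subject to a constraint on its first `t` coordinates, so it suffices
that the evaluation vectors of the ball `‖f‖ ≤ B` are exactly the vectors `K_{t+1} w` with
`wᵀ K_{t+1} w ≤ B²`. For `f = ∑ wⱼ k(·, pⱼ)` the evaluation vector is `K_{t+1} w` and
`‖f‖² = wᵀ K_{t+1} w`; a general `f` may be replaced by its orthogonal projection onto the span of
the `k(·, pⱼ)`, which has the same evaluations at the `pⱼ` and no larger norm.
-/

open Matrix
open scoped RealInnerProductSpace

section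

variable {H : Type*} [NormedAddCommGroup H] [InnerProductSpace ℝ H] {ι : Type*} [Fintype ι]
  (v : ι → H)

namespace Matrix

lemma gram_mulVec_apply_eq_inner_sum (w : ι → ℝ) (i : ι) :
    (gram ℝ v *ᵥ w) i = ⟪∑ j, w j • v j, v i⟫ := by
  simp only [mulVec, dotProduct, gram_apply, sum_inner, real_inner_smul_left]
  exact Finset.sum_congr rfl fun j _ => by rw [real_inner_comm, mul_comm]

lemma dotProduct_gram_mulVec_eq_norm_sum_sq (w : ι → ℝ) :
    w ⬝ᵥ gram ℝ v *ᵥ w = ‖∑ j, w j • v j‖ ^ 2 := by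
  simpa [real_inner_self_eq_norm_sq] using star_dotProduct_gram_mulVec (𝕜 := ℝ) v w w

end Matrix

lemma exists_sum_smul_inner_eq_and_norm_le (f : H) :
    ∃ w : ι → ℝ, (∀ i, ⟪∑ j, w j • v j, v i⟫ = ⟪f, v i⟫) ∧ ‖∑ j, w j • v j‖ ≤ ‖f‖ := by
  set S := Submodule.span ℝ (Set.range v)
  have : FiniteDimensional ℝ S := FiniteDimensional.span_of_finite ℝ (Set.finite_range v)
  obtain ⟨w, hw⟩ := (Submodule.mem_span_range_iff_exists_fun ℝ).mp (S.starProjection_apply_mem f)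
  refine ⟨w, fun i => ?_, hw ▸ S.norm_starProjection_apply_le f⟩
  rw [hw, Submodule.inner_starProjection_left_eq_right,
    (S.starProjection_eq_self_iff).mpr (Submodule.subset_span ⟨i, rfl⟩)]

theorem image_inner_closedBall_eq_image_gram_mulVec {B : ℝ} (hB : 0 ≤ B) :
    (fun f i => ⟪f, v i⟫) '' Metric.closedBall 0 B
      = (gram ℝ v *ᵥ ·) '' {w | w ⬝ᵥ gram ℝ v *ᵥ w ≤ B ^ 2} := by
  ext e
  simp only [Set.mem_image, mem_closedBall_zero_iff, Set.mem_ofPred_eq,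
    dotProduct_gram_mulVec_eq_norm_sum_sq]
  constructor
  · rintro ⟨f, hf, rfl⟩
    obtain ⟨w, hinner, hnorm⟩ := exists_sum_smul_inner_eq_and_norm_le v f
    exact ⟨w, by gcongr; exact hnorm.trans hf, funext fun i => by
      rw [gram_mulVec_apply_eq_inner_sum, hinner]⟩
  · rintro ⟨w, hw, rfl⟩
    exact ⟨∑ j, w j • v j, (pow_le_pow_iff_left₀ (norm_nonneg _) hB two_ne_zero).mp hw,
      funext fun i => (gram_mulVec_apply_eq_inner_sum v w i).symm⟩

end

theorem representer_ucb_general {X : Type*} {H : Type*} [NormedAddCommGroup H]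
    [InnerProductSpace ℝ H] (K : X → H) {t : ℕ}
    (xs : Fin t → X) (x : X) (y : Fin t → ℝ) (R B : ℝ) (hB : 0 ≤ B)
    (p : Fin (t + 1) → X) (hp : p = Fin.snoc xs x)
    (kv : Fin (t + 1) → ℝ) (hkv : ∀ j, kv j = ⟪K (p j), K x⟫)
    (Kmat : Matrix (Fin (t + 1)) (Fin (t + 1)) ℝ)
    (hKmat : ∀ i j, Kmat i j = ⟪K (p i), K (p j)⟫)
    (Ktt1 : Matrix (Fin t) (Fin (t + 1)) ℝ)
    (hKtt1 : ∀ i j, Ktt1 i j = ⟪K (xs i), K (p j)⟫) :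
    sSup {v : ℝ | ∃ f : H,
        (Real.sqrt (∑ i, (⟪f, K (xs i)⟫ - y i) ^ 2) ≤ R ∧ ‖f‖ ≤ B) ∧ v = ⟪f, K x⟫}
      = sSup {v : ℝ | ∃ w : Fin (t + 1) → ℝ,
        (Real.sqrt (∑ i, ((Ktt1 *ᵥ w) i - y i) ^ 2) ≤ R ∧ w ⬝ᵥ (Kmat *ᵥ w) ≤ B ^ 2) ∧
          v = kv ⬝ᵥ w} := by
  subst hp
  set G := gram ℝ (K ∘ Fin.snoc xs x)
  have hKmat_eq : Kmat = G := Matrix.ext hKmat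
  have hKtt1_mulVec : ∀ w i, (Ktt1 *ᵥ w) i = (G *ᵥ w) i.castSucc := fun w i => by
    simp [mulVec, dotProduct, G, hKtt1]
  have hkv_dotProduct : ∀ w, kv ⬝ᵥ w = (G *ᵥ w) (Fin.last t) := fun w => by
    simp [mulVec, dotProduct, G, hkv, real_inner_comm]
  let Q : (Fin (t + 1) → ℝ) → Prop := fun e => √(∑ i, (e i.castSucc - y i) ^ 2) ≤ R
  calc _ = sSup {v | ∃ e ∈ (fun f j => ⟪f, (K ∘ Fin.snoc xs x) j⟫) '' Metric.closedBall 0 B,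
          Q e ∧ v = e (Fin.last t)} := by
        congr 1; ext v
        simp only [Set.mem_ofPred_eq, Set.exists_mem_image, mem_closedBall_zero_iff, Q,
          Function.comp_apply, Fin.snoc_castSucc, Fin.snoc_last]
        exact exists_congr fun _ => by tauto
    _ = sSup {v | ∃ e ∈ (G *ᵥ ·) '' {w | w ⬝ᵥ G *ᵥ w ≤ B ^ 2}, Q e ∧ v = e (Fin.last t)} := by
        rw [image_inner_closedBall_eq_image_gram_mulVec _ hB]
    _ = _ := by
        congr 1; ext v
        simp only [Set.mem_ofPred_eq, Set.exists_mem_image, Q, hKmat_eq, hKtt1_mulVec,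
          hkv_dotProduct]
        exact exists_congr fun _ => by tauto

/-- Representer-theorem reformulation of the UCB program. The RKHS is modelled by a real
Hilbert space `H` with feature map `K : X → H` (`K z = k(·,z)`), so that `f(z) = ⟪f, K z⟫`.
The supremum of `f(x)` over `f ∈ H` with `‖(f(x₁),…,f(x_t)) - y‖ ≤ R` and `‖f‖ ≤ B`
equals the supremum of `k_{t+1}(x)ᵀw` over `w ∈ ℝ^{t+1}` with `‖K_{t,t+1}w - y‖ ≤ R`
and `wᵀK_{t+1}w ≤ B²`. -/
theorem representer_ucb {X : Type*} {H : Type*} [NormedAddCommGroup H]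
    [InnerProductSpace ℝ H] [CompleteSpace H] (K : X → H) {t : ℕ}
    (xs : Fin t → X) (x : X) (y : Fin t → ℝ) (R B : ℝ) (hR : 0 ≤ R) (hB : 0 ≤ B)
    (p : Fin (t + 1) → X) (hp : p = Fin.snoc xs x)
    (kv : Fin (t + 1) → ℝ) (hkv : ∀ j, kv j = ⟪K (p j), K x⟫)
    (Kmat : Matrix (Fin (t + 1)) (Fin (t + 1)) ℝ)
    (hKmat : ∀ i j, Kmat i j = ⟪K (p i), K (p j)⟫)
    (Ktt1 : Matrix (Fin t) (Fin (t + 1)) ℝ)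
    (hKtt1 : ∀ i j, Ktt1 i j = ⟪K (xs i), K (p j)⟫) :
    sSup {v : ℝ | ∃ f : H,
        (Real.sqrt (∑ i, (⟪f, K (xs i)⟫ - y i) ^ 2) ≤ R ∧ ‖f‖ ≤ B) ∧ v = ⟪f, K x⟫}
      = sSup {v : ℝ | ∃ w : Fin (t + 1) → ℝ,
        (Real.sqrt (∑ i, ((Ktt1 *ᵥ w) i - y i) ^ 2) ≤ R ∧ w ⬝ᵥ (Kmat *ᵥ w) ≤ B ^ 2) ∧
          v = kv ⬝ᵥ w} :=
  representer_ucb_general K xs x y R B hB p hp kv hkv Kmat hKmat Ktt1 hKtt1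
end

section
/- Suppose that for each round t ≥ 1 (up to T) the per-round regret satisfies 0 ≤ r_t ≤ min(2C, 2U_t·ρ_t) where C > 0, U_t ≥ 0 is nondecreasing in t, and ρ_t ≥ 0 satisfies ∑_{t=1}^T min(1, ρ_t²) ≤ G for some G ≥ 0. Then ∑_{t=1}^T r_t ≤ 2·√(T·max(C², U_T²)·G). -/
/-!
Each regret term is bounded by `2C` when `ρ_t ≥ 1` and by `2 U_t ρ_t ≤ 2 U_T ρ_t` otherwise, so
`r_t² ≤ 4 max(C², U_T²) min(1, ρ_t²)`, whence `∑ r_t² ≤ 4 max(C², U_T²) G`; Cauchy–Schwarz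
`(∑ r_t)² ≤ T ∑ r_t²` finishes the proof.
-/

open Finset

lemma sq_le_max_sq_mul_min_one_sq {r a b ρ : ℝ} (hr₀ : 0 ≤ r) (hr : r ≤ min a (b * ρ)) :
    r ^ 2 ≤ max (a ^ 2) (b ^ 2) * min 1 (ρ ^ 2) := by
  rcases le_total (ρ ^ 2) 1 with hρ | hρ
  · calc r ^ 2 ≤ (b * ρ) ^ 2 := pow_le_pow_left₀ hr₀ (hr.trans (min_le_right _ _)) 2
      _ = b ^ 2 * ρ ^ 2 := mul_pow _ _ _
      _ ≤ max (a ^ 2) (b ^ 2) * min 1 (ρ ^ 2) := by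
        rw [min_eq_right hρ]
        gcongr
        exact le_max_right _ _
  · calc r ^ 2 ≤ a ^ 2 := pow_le_pow_left₀ hr₀ (hr.trans (min_le_left _ _)) 2
      _ ≤ max (a ^ 2) (b ^ 2) * min 1 (ρ ^ 2) := by
        rw [min_eq_left hρ, mul_one]
        exact le_max_left _ _

lemma Finset.sum_le_sqrt_mul_of_sum_sq_le {ι : Type*} {s : Finset ι} {f : ι → ℝ} {n B : ℝ}
    (hn : (#s : ℝ) ≤ n) (hB : ∑ i ∈ s, f i ^ 2 ≤ B) : ∑ i ∈ s, f i ≤ √(n * B) :=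
  Real.le_sqrt_of_sq_le <| sq_sum_le_card_mul_sum_sq.trans <|
    mul_le_mul hn hB (sum_nonneg fun _ _ ↦ sq_nonneg _) ((Nat.cast_nonneg _).trans hn)

theorem cumulative_regret_bound_general (T : ℕ) (r U ρ : ℕ → ℝ) (C G : ℝ)
    (hU : Monotone U) (hUnn : ∀ t, 0 ≤ U t)
    (hr : ∀ t ∈ Finset.Icc 1 T, 0 ≤ r t ∧ r t ≤ min (2 * C) (2 * U t * ρ t))
    (hsum : ∑ t ∈ Finset.Icc 1 T, min 1 (ρ t ^ 2) ≤ G) :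
    ∑ t ∈ Finset.Icc 1 T, r t
      ≤ 2 * Real.sqrt ((T : ℝ) * max (C ^ 2) (U T ^ 2) * G) := by
  set M := max (C ^ 2) (U T ^ 2)
  have hr_sq : ∀ t ∈ Icc 1 T, r t ^ 2 ≤ 4 * M * min 1 (ρ t ^ 2) := by
    intro t ht
    have hUt : U t ^ 2 ≤ U T ^ 2 := pow_le_pow_left₀ (hUnn t) (hU (mem_Icc.1 ht).2) 2
    refine (sq_le_max_sq_mul_min_one_sq (hr t ht).1 (hr t ht).2).trans ?_
    rw [mul_pow, mul_pow, ← mul_max_of_nonneg _ _ (by norm_num)]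
    gcongr
    · norm_num
    · exact max_le_max_left _ hUt
  have hsum_sq : ∑ t ∈ Icc 1 T, r t ^ 2 ≤ 4 * M * G :=
    (sum_le_sum hr_sq).trans <| by rw [← mul_sum]; gcongr
  calc ∑ t ∈ Icc 1 T, r t ≤ √(T * (4 * M * G)) := sum_le_sqrt_mul_of_sum_sq_le (by simp) hsum_sq
    _ = 2 * √(T * M * G) := by
      rw [show (T : ℝ) * (4 * M * G) = 2 ^ 2 * (T * M * G) by ring,
        Real.sqrt_mul (by norm_num), Real.sqrt_sq (by norm_num)]

/-- Cumulative regret bound: if `0 ≤ r_t ≤ min(2C, 2U_t·ρ_t)` with `U` nondecreasing and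
`∑_{t=1}^T min(1, ρ_t²) ≤ G`, then `∑_{t=1}^T r_t ≤ 2√(T·max(C², U_T²)·G)`. -/
theorem cumulative_regret_bound (T : ℕ) (r U ρ : ℕ → ℝ) (C G : ℝ) (hC : 0 < C)
    (hG : 0 ≤ G) (hU : Monotone U) (hUnn : ∀ t, 0 ≤ U t) (hρ : ∀ t, 0 ≤ ρ t)
    (hr : ∀ t ∈ Finset.Icc 1 T, 0 ≤ r t ∧ r t ≤ min (2 * C) (2 * U t * ρ t))
    (hsum : ∑ t ∈ Finset.Icc 1 T, min 1 (ρ t ^ 2) ≤ G) :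
    ∑ t ∈ Finset.Icc 1 T, r t
      ≤ 2 * Real.sqrt ((T : ℝ) * max (C ^ 2) (U T ^ 2) * G) :=
  cumulative_regret_bound_general T r U ρ C G hU hUnn hr hsum
end

section
/- Let H be a real Hilbert space, k, y-data as follows: let Φ : H → ℝ^t be bounded linear with V = Φ*Φ and K = ΦΦ*, let k ∈ H, y ∈ ℝ^t, R, B ≥ 0, and η₁, η₂ > 0 with α = η₂/η₁. Then sup over f ∈ H of [⟨k,f⟩ + η₁(R² - ‖Φf - y‖²) + η₂(B² - ‖f‖²)] equals ⟨k, μ_α⟩ + (1/(4η₁α))·(⟨k,k⟩ - (Φk)ᵀ(K + αI)^{-1}(Φk)) + η₁·R̃_α², where μ_α = (V + αI)^{-1}Φ*y and R̃_α² = R² + αB² - yᵀ((1/α)K + I)^{-1}y. -/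
/-!
Completing the square, `‖Φ f - y‖² + α ‖f‖² = ⟪f, (Φ*Φ + α) f⟫ - 2 ⟪Φ* y, f⟫ + ‖y‖²`, writes the
objective as `η₁ (2 ⟪b, f⟫ - ⟪f, (Φ*Φ + α) f⟫)` plus a constant, where `b = Φ* y + k / (2 η₁)`.
This concave quadratic attains its maximum `⟪b, (Φ*Φ + α)⁻¹ b⟫` at `(Φ*Φ + α)⁻¹ b`. The
push-through identity `(Φ*Φ + α)⁻¹ Φ* = Φ* (ΦΦ* + α)⁻¹` gives
`α (Φ*Φ + α)⁻¹ = 1 - Φ* (ΦΦ* + α)⁻¹ Φ` and, with the roles of `Φ` and `Φ*` exchanged,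
`((1/α) ΦΦ* + 1)⁻¹ = α (ΦΦ* + α)⁻¹ = 1 - Φ (Φ*Φ + α)⁻¹ Φ*`; these turn the maximum into the
closed form.
-/

open ContinuousLinearMap
open scoped RealInnerProductSpace

namespace LinearMap.IsSymmetric

open scoped InnerProductSpace

variable {𝕜 E : Type*} [RCLike 𝕜] [NormedAddCommGroup E] [InnerProductSpace 𝕜 E]
  {A S S' : E →L[𝕜] E}

/-- A symmetric operator with a right inverse is onto, so the right inverse is also a left
inverse. -/
theorem comp_eq_id_of_comp_eq_id (hA : (A : E →ₗ[𝕜] E).IsSymmetric)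
    (hS : A ∘L S = .id 𝕜 E) : S ∘L A = .id 𝕜 E := by
  have hAS (x : E) : A (S x) = x := DFunLike.congr_fun hS x
  ext x
  refine ext_inner_right 𝕜 fun z => ?_
  calc ⟪S (A x), z⟫_𝕜 = ⟪S (A x), A (S z)⟫_𝕜 := by rw [hAS]
    _ = ⟪A (S (A x)), S z⟫_𝕜 := (hA _ _).symm
    _ = ⟪x, A (S z)⟫_𝕜 := by rw [hAS]; exact hA _ _
    _ = ⟪x, z⟫_𝕜 := by rw [hAS]

theorem isSymmetric_of_comp_eq_id (hA : (A : E →ₗ[𝕜] E).IsSymmetric)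
    (hS : A ∘L S = .id 𝕜 E) : (S : E →ₗ[𝕜] E).IsSymmetric := fun x z => by
  have hAS (x : E) : A (S x) = x := DFunLike.congr_fun hS x
  calc ⟪S x, z⟫_𝕜 = ⟪S x, A (S z)⟫_𝕜 := by rw [hAS]
    _ = ⟪A (S x), S z⟫_𝕜 := (hA _ _).symm
    _ = ⟪x, S z⟫_𝕜 := by rw [hAS]

theorem eq_of_comp_eq_id (hA : (A : E →ₗ[𝕜] E).IsSymmetric)
    (hS : A ∘L S = .id 𝕜 E) (hS' : A ∘L S' = .id 𝕜 E) : S = S' := by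
  calc S = (S ∘L A) ∘L S' := by
        rw [ContinuousLinearMap.comp_assoc, hS', ContinuousLinearMap.comp_id]
    _ = S' := by rw [hA.comp_eq_id_of_comp_eq_id hS, ContinuousLinearMap.id_comp]

end LinearMap.IsSymmetric

theorem isGreatest_range_two_inner_sub_inner_apply {H : Type*} [NormedAddCommGroup H]
    [InnerProductSpace ℝ H] {A : H →L[ℝ] H} (hA : A.IsPositive) {b f₀ : H} (hf₀ : A f₀ = b) :
    IsGreatest (Set.range fun f => 2 * ⟪b, f⟫ - ⟪f, A f⟫) ⟪b, f₀⟫ := by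
  have hsq (f : H) : 2 * ⟪b, f⟫ - ⟪f, A f⟫ = ⟪b, f₀⟫ - ⟪f - f₀, A (f - f₀)⟫ := by
    have hsymm : ⟪f₀, A f⟫ = ⟪b, f⟫ := by
      rw [← hf₀]; exact (hA.isSymmetric f₀ f).symm
    rw [map_sub, inner_sub_left, inner_sub_right, inner_sub_right, hsymm, hf₀,
      real_inner_comm f₀ b, real_inner_comm f b]
    ring
  refine ⟨⟨f₀, by simp only [hsq, sub_self, inner_zero_left, sub_zero]⟩, ?_⟩
  rintro _ ⟨f, rfl⟩
  simpa only [hsq, sub_le_self_iff] using hA.inner_nonneg_right (f - f₀)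

section RegularizedGram

variable {H E : Type*} [NormedAddCommGroup H] [InnerProductSpace ℝ H] [CompleteSpace H]
  [NormedAddCommGroup E] [InnerProductSpace ℝ E] [CompleteSpace E]
  (Φ : H →L[ℝ] E) {α : ℝ} {Vinv : H →L[ℝ] H} {Kinv : E →L[ℝ] E}

theorem isSymmetric_adjoint_comp_self_add_smul_id (α : ℝ) :
    ((adjoint Φ ∘L Φ + α • .id ℝ H : H →L[ℝ] H) : H →ₗ[ℝ] H).IsSymmetric := fun x z => by
  simp [inner_add_left, inner_add_right, real_inner_smul_left, real_inner_smul_right,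
    adjoint_inner_left, adjoint_inner_right]

theorem isPositive_adjoint_comp_self_add_smul_id (hα : 0 ≤ α) :
    (adjoint Φ ∘L Φ + α • .id ℝ H).IsPositive :=
  (isPositive_adjoint_comp_self Φ).add (isPositive_id.smul_of_nonneg hα)

theorem norm_sub_sq_add_mul_norm_sq (f : H) (y : E) (α : ℝ) :
    ‖Φ f - y‖ ^ 2 + α * ‖f‖ ^ 2
      = ⟪f, (adjoint Φ ∘L Φ + α • .id ℝ H) f⟫ - 2 * ⟪adjoint Φ y, f⟫ + ‖y‖ ^ 2 := by
  rw [norm_sub_sq_real, add_apply, inner_add_right, comp_apply, adjoint_inner_right,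
    adjoint_inner_left, smul_apply, id_apply, real_inner_smul_right, real_inner_comm y,
    real_inner_self_eq_norm_sq f, real_inner_self_eq_norm_sq (Φ f)]
  ring

variable {Φ}

theorem comp_adjoint_eq_adjoint_comp (hV : (adjoint Φ ∘L Φ + α • .id ℝ H) ∘L Vinv = .id ℝ H)
    (hK : (Φ ∘L adjoint Φ + α • .id ℝ E) ∘L Kinv = .id ℝ E) :
    Vinv ∘L adjoint Φ = adjoint Φ ∘L Kinv := by
  have hVl := (isSymmetric_adjoint_comp_self_add_smul_id Φ α).comp_eq_id_of_comp_eq_id hV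
  have hcomm : adjoint Φ ∘L (Φ ∘L adjoint Φ + α • .id ℝ E)
      = (adjoint Φ ∘L Φ + α • .id ℝ H) ∘L adjoint Φ := by
    ext x; simp
  calc Vinv ∘L adjoint Φ
        = Vinv ∘L adjoint Φ ∘L ((Φ ∘L adjoint Φ + α • .id ℝ E) ∘L Kinv) := by rw [hK, comp_id]
    _ = (Vinv ∘L (adjoint Φ ∘L Φ + α • .id ℝ H)) ∘L adjoint Φ ∘L Kinv := by
        rw [← comp_assoc (adjoint Φ), hcomm]; simp only [comp_assoc]
    _ = adjoint Φ ∘L Kinv := by rw [hVl, id_comp]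

theorem smul_eq_id_sub_adjoint_comp (hV : (adjoint Φ ∘L Φ + α • .id ℝ H) ∘L Vinv = .id ℝ H)
    (hK : (Φ ∘L adjoint Φ + α • .id ℝ E) ∘L Kinv = .id ℝ E) :
    α • Vinv = .id ℝ H - adjoint Φ ∘L Kinv ∘L Φ := by
  have hVl := (isSymmetric_adjoint_comp_self_add_smul_id Φ α).comp_eq_id_of_comp_eq_id hV
  calc α • Vinv = Vinv ∘L ((adjoint Φ ∘L Φ + α • .id ℝ H) - adjoint Φ ∘L Φ) := by
        rw [add_sub_cancel_left, comp_smul, comp_id]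
    _ = .id ℝ H - (Vinv ∘L adjoint Φ) ∘L Φ := by rw [comp_sub, hVl, comp_assoc]
    _ = .id ℝ H - adjoint Φ ∘L Kinv ∘L Φ := by
        rw [comp_adjoint_eq_adjoint_comp hV hK, comp_assoc]

theorem mul_inner_apply_self_eq_sub (hV : (adjoint Φ ∘L Φ + α • .id ℝ H) ∘L Vinv = .id ℝ H)
    (hK : (Φ ∘L adjoint Φ + α • .id ℝ E) ∘L Kinv = .id ℝ E) (x : H) :
    α * ⟪x, Vinv x⟫ = ⟪x, x⟫ - ⟪Φ x, Kinv (Φ x)⟫ := by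
  have h := congr(⟪x, $(smul_eq_id_sub_adjoint_comp hV hK) x⟫)
  simpa only [smul_apply, real_inner_smul_right, sub_apply, inner_sub_right, id_apply,
    comp_apply, adjoint_inner_right] using h

theorem sSup_range_lagrangian_eq (k : H) (y : E) (R B : ℝ) {η₁ : ℝ} (hη₁ : 0 < η₁) (hα : 0 ≤ α)
    (hV : (adjoint Φ ∘L Φ + α • .id ℝ H) ∘L Vinv = .id ℝ H) :
    sSup (Set.range fun f : H =>
        ⟪k, f⟫ + η₁ * (R ^ 2 - ‖Φ f - y‖ ^ 2) + η₁ * α * (B ^ 2 - ‖f‖ ^ 2))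
      = η₁ * ⟪adjoint Φ y + (2 * η₁)⁻¹ • k, Vinv (adjoint Φ y + (2 * η₁)⁻¹ • k)⟫
        + η₁ * (R ^ 2 + α * B ^ 2 - ‖y‖ ^ 2) := by
  set b := adjoint Φ y + (2 * η₁)⁻¹ • k
  set c := η₁ * (R ^ 2 + α * B ^ 2 - ‖y‖ ^ 2)
  have hmax := isGreatest_range_two_inner_sub_inner_apply
    (isPositive_adjoint_comp_self_add_smul_id Φ hα) (b := b) (f₀ := Vinv b)
    (DFunLike.congr_fun hV b)
  have hobj : (fun f : H => ⟪k, f⟫ + η₁ * (R ^ 2 - ‖Φ f - y‖ ^ 2) + η₁ * α * (B ^ 2 - ‖f‖ ^ 2))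
      = (fun v => η₁ * v + c) ∘ fun f => 2 * ⟪b, f⟫ - ⟪f, (adjoint Φ ∘L Φ + α • .id ℝ H) f⟫ := by
    funext f
    have hsq := norm_sub_sq_add_mul_norm_sq Φ f y α
    simp only [Function.comp, b, c, inner_add_left, real_inner_smul_left]
    field_simp
    linear_combination (-η₁) * hsq
  have hmono : Monotone fun v => η₁ * v + c :=
    fun _ _ h => add_le_add_left (mul_le_mul_of_nonneg_left h hη₁.le) _
  rw [hobj, Set.range_comp, (hmono.map_isGreatest hmax).csSup_eq]

end RegularizedGram

theorem eq_smul_of_inv_smul_add_id_comp_eq_id {E : Type*} [NormedAddCommGroup E]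
    [InnerProductSpace ℝ E] {G Kinv Minv : E →L[ℝ] E} (hG : (G : E →ₗ[ℝ] E).IsSymmetric)
    {α : ℝ} (hα : α ≠ 0) (hK : (G + α • .id ℝ E) ∘L Kinv = .id ℝ E)
    (hM : (α⁻¹ • G + .id ℝ E) ∘L Minv = .id ℝ E) : Minv = α • Kinv := by
  have hN : ((α⁻¹ • G + .id ℝ E : E →L[ℝ] E) : E →ₗ[ℝ] E).IsSymmetric := by
    simpa using (hG.smul (conj_trivial α⁻¹)).add LinearMap.IsSymmetric.id
  refine hN.eq_of_comp_eq_id hM ?_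
  rw [comp_smul, show α⁻¹ • G + .id ℝ E = α⁻¹ • (G + α • .id ℝ E) by
    rw [smul_add, smul_smul, inv_mul_cancel₀ hα, one_smul], smul_comp, hK, smul_smul,
    mul_inv_cancel₀ hα, one_smul]

theorem dual_function_closed_form_general {H : Type*} [NormedAddCommGroup H]
    [InnerProductSpace ℝ H] [CompleteSpace H] {t : ℕ}
    (Φ : H →L[ℝ] EuclideanSpace ℝ (Fin t)) (k : H) (y : EuclideanSpace ℝ (Fin t))
    (R B η₁ η₂ α : ℝ) (hη₁ : 0 < η₁) (hη₂ : 0 < η₂)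
    (hα : α = η₂ / η₁)
    (Vinv : H →L[ℝ] H)
    (hV₁ : ((adjoint Φ) ∘L Φ + α • ContinuousLinearMap.id ℝ H) ∘L Vinv
        = ContinuousLinearMap.id ℝ H)
    (Kinv : EuclideanSpace ℝ (Fin t) →L[ℝ] EuclideanSpace ℝ (Fin t))
    (hK₁ : (Φ ∘L (adjoint Φ) + α • ContinuousLinearMap.id ℝ (EuclideanSpace ℝ (Fin t))) ∘L Kinv
        = ContinuousLinearMap.id ℝ (EuclideanSpace ℝ (Fin t)))
    (Minv : EuclideanSpace ℝ (Fin t) →L[ℝ] EuclideanSpace ℝ (Fin t))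
    (hM₁ : (α⁻¹ • (Φ ∘L (adjoint Φ)) + ContinuousLinearMap.id ℝ (EuclideanSpace ℝ (Fin t))) ∘L Minv
        = ContinuousLinearMap.id ℝ (EuclideanSpace ℝ (Fin t))) :
    sSup (Set.range fun f : H =>
        ⟪k, f⟫ + η₁ * (R ^ 2 - ‖Φ f - y‖ ^ 2) + η₂ * (B ^ 2 - ‖f‖ ^ 2))
      = ⟪k, Vinv ((adjoint Φ) y)⟫
        + (1 / (4 * η₁ * α)) * (⟪k, k⟫ - ⟪Φ k, Kinv (Φ k)⟫)
        + η₁ * (R ^ 2 + α * B ^ 2 - ⟪y, Minv y⟫) := by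
  have hαpos : 0 < α := hα ▸ div_pos hη₂ hη₁
  have hη₂α : η₂ = η₁ * α := by rw [hα]; field_simp
  have hVsymm : ⟪adjoint Φ y, Vinv k⟫ = ⟪k, Vinv (adjoint Φ y)⟫ := by
    rw [real_inner_comm]
    exact (isSymmetric_adjoint_comp_self_add_smul_id Φ α).isSymmetric_of_comp_eq_id hV₁ _ _
  have hk := mul_inner_apply_self_eq_sub hV₁ hK₁ k
  have hy := mul_inner_apply_self_eq_sub (Φ := adjoint Φ) (by rwa [adjoint_adjoint])
    (by rwa [adjoint_adjoint]) y
  rw [hη₂α, sSup_range_lagrangian_eq k y R B hη₁ hαpos.le hV₁,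
    eq_smul_of_inv_smul_add_id_comp_eq_id (isPositive_self_comp_adjoint Φ).isSymmetric
      hαpos.ne' hK₁ hM₁, smul_apply, real_inner_smul_right, hy, ← hk, real_inner_self_eq_norm_sq]
  simp only [map_add, map_smul, inner_add_left, inner_add_right, real_inner_smul_left,
    real_inner_smul_right, hVsymm]
  field_simp
  ring

/-- Closed form of the Lagrangian dual function of the two-ellipsoid UCB program:
`sup_f [⟨k,f⟩ + η₁(R² - ‖Φf - y‖²) + η₂(B² - ‖f‖²)]
  = ⟨k, μ_α⟩ + (1/(4η₁α))(⟨k,k⟩ - (Φk)ᵀ(K + αI)⁻¹(Φk)) + η₁·R̃_α²`,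
where `α = η₂/η₁`, `μ_α = (V + αI)⁻¹Φ*y`, and
`R̃_α² = R² + αB² - yᵀ((1/α)K + I)⁻¹y`. -/
theorem dual_function_closed_form {H : Type*} [NormedAddCommGroup H]
    [InnerProductSpace ℝ H] [CompleteSpace H] {t : ℕ}
    (Φ : H →L[ℝ] EuclideanSpace ℝ (Fin t)) (k : H) (y : EuclideanSpace ℝ (Fin t))
    (R B η₁ η₂ α : ℝ) (hR : 0 ≤ R) (hB : 0 ≤ B) (hη₁ : 0 < η₁) (hη₂ : 0 < η₂)
    (hα : α = η₂ / η₁)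
    (Vinv : H →L[ℝ] H)
    (hV₁ : ((adjoint Φ) ∘L Φ + α • ContinuousLinearMap.id ℝ H) ∘L Vinv
        = ContinuousLinearMap.id ℝ H)
    (hV₂ : Vinv ∘L ((adjoint Φ) ∘L Φ + α • ContinuousLinearMap.id ℝ H)
        = ContinuousLinearMap.id ℝ H)
    (Kinv : EuclideanSpace ℝ (Fin t) →L[ℝ] EuclideanSpace ℝ (Fin t))
    (hK₁ : (Φ ∘L (adjoint Φ) + α • ContinuousLinearMap.id ℝ (EuclideanSpace ℝ (Fin t))) ∘L Kinv
        = ContinuousLinearMap.id ℝ (EuclideanSpace ℝ (Fin t)))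
    (hK₂ : Kinv ∘L (Φ ∘L (adjoint Φ) + α • ContinuousLinearMap.id ℝ (EuclideanSpace ℝ (Fin t)))
        = ContinuousLinearMap.id ℝ (EuclideanSpace ℝ (Fin t)))
    (Minv : EuclideanSpace ℝ (Fin t) →L[ℝ] EuclideanSpace ℝ (Fin t))
    (hM₁ : (α⁻¹ • (Φ ∘L (adjoint Φ)) + ContinuousLinearMap.id ℝ (EuclideanSpace ℝ (Fin t))) ∘L Minv
        = ContinuousLinearMap.id ℝ (EuclideanSpace ℝ (Fin t)))
    (hM₂ : Minv ∘L (α⁻¹ • (Φ ∘L (adjoint Φ)) + ContinuousLinearMap.id ℝ (EuclideanSpace ℝ (Fin t)))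
        = ContinuousLinearMap.id ℝ (EuclideanSpace ℝ (Fin t))) :
    sSup (Set.range fun f : H =>
        ⟪k, f⟫ + η₁ * (R ^ 2 - ‖Φ f - y‖ ^ 2) + η₂ * (B ^ 2 - ‖f‖ ^ 2))
      = ⟪k, Vinv ((adjoint Φ) y)⟫
        + (1 / (4 * η₁ * α)) * (⟪k, k⟫ - ⟪Φ k, Kinv (Φ k)⟫)
        + η₁ * (R ^ 2 + α * B ^ 2 - ⟪y, Minv y⟫) :=
  dual_function_closed_form_general Φ k y R B η₁ η₂ α hη₁ hη₂ hα Vinv hV₁ Kinv hK₁ Minv hM₁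
end
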